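/- arXiv:cs/9906031 — 2 statements merged into one kernel-verified Lean document; each statement's English description precedes it below -/
import Mathlib

section
/- If a formula A is closed under stuttering, then □A (always A) is closed under stuttering. -/
def State := String → Bool

def StSeq := ℕ → State

def drop (k : ℕ) (s : StSeq) : StSeq := fun n => s (k + n)

def stutter (s : StSeq) (i : ℕ) : StSeq := fun n => if n ≤ i then s n else s (n - 1)

def CUS (F : StSeq → Prop) : Prop := ∀ (s : StSeq) (i : ℕ), F s ↔ F (stutter s i)

def Var (a : String) : StSeq → Prop := fun s => s 0 a = true

def Not' (F : StSeq → Prop) : StSeq → Prop := fun s => ¬ F s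

def And' (F G : StSeq → Prop) : StSeq → Prop := fun s => F s ∧ G s

def Or' (F G : StSeq → Prop) : StSeq → Prop := fun s => F s ∨ G s

def Imp' (F G : StSeq → Prop) : StSeq → Prop := fun s => F s → G s

def Iff' (F G : StSeq → Prop) : StSeq → Prop := fun s => F s ↔ G s

def Next (F : StSeq → Prop) : StSeq → Prop := fun s => F (drop 1 s)

def Always (F : StSeq → Prop) : StSeq → Prop := fun s => ∀ k, F (drop k s)

def Ev (F : StSeq → Prop) : StSeq → Prop := fun s => ∃ k, F (drop k s)

def Until' (F G : StSeq → Prop) : StSeq → Prop :=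
  fun s => ∃ k, G (drop k s) ∧ ∀ j < k, F (drop j s)

def Up (F : StSeq → Prop) : StSeq → Prop := And' (Not' F) (Next F)

def Down (F : StSeq → Prop) : StSeq → Prop := And' F (Next (Not' F))

def AnyEdge (F : StSeq → Prop) : StSeq → Prop := Or' (Up F) (Down F)

/-! Every suffix of `stutter s i` is either a stuttered suffix of `s` (when it starts at or before
position `i`) or a plain suffix of `s` (when it starts after it), so `□A` inherits invariance
under stuttering from `A` suffix by suffix. -/

lemma drop_stutter_of_le (s : StSeq) {i k : ℕ} (hk : k ≤ i) :
    drop k (stutter s i) = stutter (drop k s) (i - k) := by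
  funext n
  simp only [drop, stutter]
  split_ifs
  · rfl
  · omega
  · omega
  · congr 1; omega

lemma drop_succ_stutter_of_le (s : StSeq) {i k : ℕ} (hk : i ≤ k) :
    drop (k + 1) (stutter s i) = drop k s := by
  funext n
  simp only [drop, stutter]
  rw [if_neg (by omega)]
  congr 1
  omega

theorem cus_always (A : StSeq → Prop) (hA : CUS A) : CUS (Always A) := by
  intro s i
  constructor
  · intro h k
    rcases le_or_gt k i with hk | hk
    · rw [drop_stutter_of_le s hk]
      exact (hA _ _).mp (h k)
    · obtain ⟨j, rfl⟩ : ∃ j, k = j + 1 := ⟨k - 1, by omega⟩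
      rw [drop_succ_stutter_of_le s (by omega)]
      exact h j
  · intro h k
    rcases le_or_gt k i with hk | hk
    · have hstut := h k
      rw [drop_stutter_of_le s hk] at hstut
      exact (hA _ _).mpr hstut
    · simpa only [drop_succ_stutter_of_le s hk.le] using h (k + 1)
end

section
/- If any LTL formula built from atomic propositions using ¬, ∧, □, ◇, and U (i.e., containing no 'next' operator), then it is closed under stuttering. -/
inductive Formula where
  | var : String → Formula
  | not : Formula → Formula
  | and : Formula → Formula → Formula
  | next : Formula → Formula
  | always : Formula → Formula
  | ev : Formula → Formula
  | until' : Formula → Formula → Formula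

def interp : Formula → StSeq → Prop
  | .var a => Var a
  | .not A => Not' (interp A)
  | .and A B => And' (interp A) (interp B)
  | .next A => Next (interp A)
  | .always A => Always (interp A)
  | .ev A => Ev (interp A)
  | .until' A B => Until' (interp A) (interp B)

def NextFree : Formula → Prop
  | .var _ => True
  | .not A => NextFree A
  | .and A B => NextFree A ∧ NextFree B
  | .next _ => False
  | .always A => NextFree A
  | .ev A => NextFree A
  | .until' A B => NextFree A ∧ NextFree B

/-!
Stuttering position `i` reindexes the suffixes of a sequence by the monotone surjection
`k ↦ if k ≤ i then k else k - 1`, except that the suffixes starting at `k ≤ i` are themselves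
stuttered. A stutter-closed formula cannot tell those apart from the original suffixes, and
`□`, `◇` and `U` only quantify over suffixes in a way that survives a monotone surjective
reindexing, so closure under stuttering propagates through every connective except `○`.
-/

/-- The index of the state of `s` that appears at position `k` of `stutter s i`. -/
def stutterIdx (i k : ℕ) : ℕ := if k ≤ i then k else k - 1

lemma stutterIdx_monotone (i : ℕ) : Monotone (stutterIdx i) := by
  intro j k hjk
  unfold stutterIdx
  split_ifs <;> omega

lemma stutterIdx_surjective (i : ℕ) : Function.Surjective (stutterIdx i) := by
  intro k
  by_cases hk : k ≤ i
  · exact ⟨k, if_pos hk⟩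
  · exact ⟨k + 1, by unfold stutterIdx; split_ifs <;> omega⟩

/-- The pattern of `Until'` is invariant under a monotone surjective reindexing of time. -/
lemma exists_forall_lt_comp_iff {P Q : ℕ → Prop} {u : ℕ → ℕ} (hu : Monotone u)
    (hsurj : Function.Surjective u) :
    (∃ k, Q (u k) ∧ ∀ j < k, P (u j)) ↔ ∃ k, Q k ∧ ∀ j < k, P j := by
  constructor
  · rintro ⟨k, hQ, hP⟩
    refine ⟨u k, hQ, fun j hj => ?_⟩
    obtain ⟨j', rfl⟩ := hsurj j
    exact hP j' (hu.reflect_lt hj)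
  · rintro ⟨k, hQ, hP⟩
    have hex : ∃ m, u m = k := hsurj k
    -- the first time `u` reaches `k`, so that every earlier time is mapped strictly below `k`
    refine ⟨Nat.find hex, (Nat.find_spec hex).symm ▸ hQ, fun j hj => hP _ ?_⟩
    exact lt_of_le_of_ne ((hu hj.le).trans_eq (Nat.find_spec hex)) (Nat.find_min hex hj)

lemma drop_stutter_of_lt (s : StSeq) {i k : ℕ} (hk : i < k) :
    drop k (stutter s i) = drop (k - 1) s := by
  funext n
  simp only [drop, stutter]
  rw [if_neg (by omega)]
  congr 1
  omega

namespace CUS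

variable {F G : StSeq → Prop}

lemma drop_stutter (hF : CUS F) (s : StSeq) (i k : ℕ) :
    F (drop k (stutter s i)) ↔ F (drop (stutterIdx i k) s) := by
  unfold stutterIdx
  split_ifs with hk
  · rw [drop_stutter_of_le s hk, ← hF]
  · rw [drop_stutter_of_lt s (not_le.mp hk)]

lemma not (hF : CUS F) : CUS (Not' F) := fun s i => not_congr (hF s i)

lemma and (hF : CUS F) (hG : CUS G) : CUS (And' F G) := fun s i => and_congr (hF s i) (hG s i)

lemma always (hF : CUS F) : CUS (Always F) := fun s i => by
  simp only [Always, hF.drop_stutter]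
  exact (stutterIdx_surjective i).forall

lemma ev (hF : CUS F) : CUS (Ev F) := fun s i => by
  simp only [Ev, hF.drop_stutter]
  exact (stutterIdx_surjective i).exists

lemma until' (hF : CUS F) (hG : CUS G) : CUS (Until' F G) := fun s i => by
  simp only [Until', hF.drop_stutter, hG.drop_stutter]
  exact (exists_forall_lt_comp_iff (stutterIdx_monotone i) (stutterIdx_surjective i)).symm

end CUS

lemma cus_var (a : String) : CUS (Var a) := fun s i => by
  simp [Var, stutter]

theorem nextFree_cus (F : Formula) (h : NextFree F) : CUS (interp F) := by
  induction F with
  | var a => exact cus_var a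
  | not A ihA => exact (ihA h).not
  | and A B ihA ihB => exact (ihA h.1).and (ihB h.2)
  | next A => exact h.elim
  | always A ihA => exact (ihA h).always
  | ev A ihA => exact (ihA h).ev
  | until' A B ihA ihB => exact (ihA h.1).until' (ihB h.2)
end
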